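/- Supplementary Lemma (Hellinger–ℓ₂ comparison for exponential families): Let (φ_j)_{j≥1}, together with φ₀ ≡ 1, be an orthonormal basis of L₂[0,1] with ∫₀¹φ_j = 0 and sup_j‖φ_j‖_∞ < ∞, and for θ ∈ ℓ₁ ∩ ℓ₂ set f_θ = exp(Σ_j θ_jφ_j − c(θ)) with e^{c(θ)} = ∫₀¹ exp(Σ_jθ_jφ_j(x))dx. Then: (i) there exists c̃ > 0 such that for all A > 0 there exists C_A > 0 with C_A⁻¹ e^{−c̃(‖θ₁‖₁ + ‖θ₁−θ₂‖₁)} ‖θ₁−θ₂‖₂² ≤ h²(f_{θ₁}, f_{θ₂}) ≤ C_A e^{c̃(‖θ₁‖₁ + ‖θ₁−θ₂‖₁)} ‖θ₁−θ₂‖₂² for all θ₁, θ₂ ∈ ℓ₁ ∩ ℓ₂ with ‖θ₁ − θ₂‖₂ ≤ A; consequently, for any c > 0 and θ₀ with ‖θ₀‖₁ = O(1), h(f_θ, f_{θ₀}) ≍ ‖θ − θ₀‖₂ uniformly over θ ∈ ℝ^k with ‖θ − θ₀‖₂ ≤ c/√k; (ii) there exist δ > 0 and C > 0 such that for any θ,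 θ' ∈ ℝ^k with ‖θ − θ'‖₂ ≤ δ/√k, h(f_θ, f_{θ'}) ≤ C√k ‖θ − θ'‖₂. -/

import Mathlib

/-!
Write `√f_θ = exp u_θ` with `u_θ = (S_θ - c(θ)) / 2` and `S_θ = Σ_j θ_j φ_j`. Since `|φ_j| ≤ B`,
`|u_θ| ≤ B‖θ‖₁`, and on `[-M, M]` the exponential is bi-Lipschitz with constants `e^{±M}`; hence
`h²(f_{θ₁}, f_{θ₂})` agrees up to factors `e^{±2M}` with `∫ (u_{θ₁} - u_{θ₂})²`, which by
orthonormality and `∫ φ_j = 0` equals `(‖θ₁ - θ₂‖₂² + (c(θ₁) - c(θ₂))²) / 4`. The normalising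
constants satisfy `|c(θ₁) - c(θ₂)| ≤ e^{2M} ∫ |S_{θ₁-θ₂}| ≤ e^{2M} ‖θ₁ - θ₂‖₂`, which gives (i); on
`‖θ - θ₀‖₂ ≤ c/√k` Cauchy–Schwarz on the first `k` coordinates keeps the `ℓ₁` norms bounded.
For (ii) no bound on `‖θ₁‖₁` is available, but `|u_{θ₁} - u_{θ₂}| ≤ B‖θ₁ - θ₂‖₁` gives
`(√f_{θ₁} - √f_{θ₂})² ≤ f_{θ₁} e^{2r} r²` with `r = B‖θ₁ - θ₂‖₁ ≤ B√k‖θ₁ - θ₂‖₂`, and `∫ f_{θ₁} = 1`.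
-/

open MeasureTheory

noncomputable section

/-- Normalizing constant `c(θ)` of the log-linear density. -/
def logNorm (φ : ℕ → ℝ → ℝ) (θ : ℕ → ℝ) : ℝ :=
  Real.log (∫ t in Set.Icc (0 : ℝ) 1, Real.exp (∑' j, θ j * φ j t))

/-- The log-linear density `f_θ = exp(Σ_j θ_jφ_j − c(θ))`. -/
def expDens (φ : ℕ → ℝ → ℝ) (θ : ℕ → ℝ) (t : ℝ) : ℝ :=
  Real.exp ((∑' j, θ j * φ j t) - logNorm φ θ)

/-- Squared Hellinger distance on `[0,1]`. -/
def hellSq (p q : ℝ → ℝ) : ℝ :=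
  ∫ t in Set.Icc (0 : ℝ) 1, (Real.sqrt (p t) - Real.sqrt (q t)) ^ 2

def hell (p q : ℝ → ℝ) : ℝ := Real.sqrt (hellSq p q)

def l1norm (θ : ℕ → ℝ) : ℝ := ∑' j, |θ j|

def l2norm (θ : ℕ → ℝ) : ℝ := Real.sqrt (∑' j, θ j ^ 2)

def memL1L2 (θ : ℕ → ℝ) : Prop :=
  Summable (fun j => |θ j|) ∧ Summable (fun j => θ j ^ 2)

/-- Identification of `ℝ^k` with zero-padded sequences. -/
def pad (k : ℕ) (v : Fin k → ℝ) : ℕ → ℝ :=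
  fun j => if h : j < k then v ⟨j, h⟩ else 0

open Real Set

lemma abs_exp_sub_exp_le_of_le {a b M : ℝ} (ha : a ≤ M) (hb : b ≤ M) :
    |exp a - exp b| ≤ exp M * |a - b| := by
  wlog hba : b ≤ a generalizing a b
  · rw [abs_sub_comm, abs_sub_comm a]
    exact this hb ha (le_of_not_ge hba)
  have key : exp a - exp b ≤ exp a * (a - b) := by
    have h : exp b = exp a * exp (b - a) := by rw [← exp_add]; ring_nf
    nlinarith [add_one_le_exp (b - a), exp_pos a]
  rw [abs_of_nonneg (sub_nonneg.2 (exp_le_exp.2 hba)), abs_of_nonneg (sub_nonneg.2 hba)]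
  exact key.trans (mul_le_mul_of_nonneg_right (exp_le_exp.2 ha) (sub_nonneg.2 hba))

lemma exp_mul_abs_sub_le_abs_exp_sub_exp {a b m : ℝ} (ha : m ≤ a) (hb : m ≤ b) :
    exp m * |a - b| ≤ |exp a - exp b| := by
  wlog hba : b ≤ a generalizing a b
  · rw [abs_sub_comm, abs_sub_comm (exp a)]
    exact this hb ha (le_of_not_ge hba)
  have key : exp b * (a - b) ≤ exp a - exp b := by
    have h : exp a = exp b * exp (a - b) := by rw [← exp_add]; ring_nf
    nlinarith [add_one_le_exp (a - b), exp_pos b]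
  rw [abs_of_nonneg (sub_nonneg.2 (exp_le_exp.2 hba)), abs_of_nonneg (sub_nonneg.2 hba)]
  exact (mul_le_mul_of_nonneg_right (exp_le_exp.2 hb) (sub_nonneg.2 hba)).trans key

lemma abs_log_sub_log_le {x y m : ℝ} (hm : 0 < m) (hx : m ≤ x) (hy : m ≤ y) :
    |log x - log y| ≤ |x - y| / m := by
  wlog hyx : y ≤ x generalizing x y
  · rw [abs_sub_comm, abs_sub_comm x]
    exact this hy hx (le_of_not_ge hyx)
  have hy0 : 0 < y := hm.trans_le hy
  rw [abs_of_nonneg (sub_nonneg.2 (log_le_log hy0 hyx)), abs_of_nonneg (sub_nonneg.2 hyx),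
    ← log_div (hy0.trans_le hyx).ne' hy0.ne']
  calc log (x / y) ≤ x / y - 1 := log_le_sub_one_of_pos (div_pos (hy0.trans_le hyx) hy0)
    _ = (x - y) / y := by field_simp
    _ ≤ (x - y) / m := div_le_div_of_nonneg_left (sub_nonneg.2 hyx) hm hy

section ExpIntegral

variable {α : Type*} [MeasurableSpace α] {μ : Measure α} [IsProbabilityMeasure μ]
  {g h : α → ℝ} {M : ℝ}

lemma integrable_exp_of_abs_le (hg : AEStronglyMeasurable g μ) (hgM : ∀ᵐ t ∂μ, |g t| ≤ M) :
    Integrable (fun t => exp (g t)) μ :=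
  .of_bound (continuous_exp.comp_aestronglyMeasurable hg) (exp M) <| by
    filter_upwards [hgM] with t ht
    rw [norm_of_nonneg (exp_pos _).le]
    exact exp_le_exp.2 (le_of_abs_le ht)

lemma integral_exp_mem_Icc (hg : AEStronglyMeasurable g μ) (hgM : ∀ᵐ t ∂μ, |g t| ≤ M) :
    ∫ t, exp (g t) ∂μ ∈ Icc (exp (-M)) (exp M) := by
  have hint := integrable_exp_of_abs_le hg hgM
  constructor
  · calc exp (-M) = ∫ _, exp (-M) ∂μ := by simp
      _ ≤ ∫ t, exp (g t) ∂μ := integral_mono_ae (integrable_const _) hint <| by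
          filter_upwards [hgM] with t ht using exp_le_exp.2 (neg_le_of_abs_le ht)
  · calc ∫ t, exp (g t) ∂μ ≤ ∫ _, exp M ∂μ := integral_mono_ae hint (integrable_const _) <| by
          filter_upwards [hgM] with t ht using exp_le_exp.2 (le_of_abs_le ht)
      _ = exp M := by simp

lemma abs_log_integral_exp_le (hg : AEStronglyMeasurable g μ) (hgM : ∀ᵐ t ∂μ, |g t| ≤ M) :
    |log (∫ t, exp (g t) ∂μ)| ≤ M := by
  obtain ⟨hlo, hhi⟩ := integral_exp_mem_Icc hg hgM
  rw [abs_le]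
  exact ⟨by simpa using log_le_log (exp_pos _) hlo,
    by simpa using log_le_log ((exp_pos _).trans_le hlo) hhi⟩

lemma log_integral_exp_le_add (hg : AEStronglyMeasurable g μ) (hh : AEStronglyMeasurable h μ)
    (hgM : ∀ᵐ t ∂μ, |g t| ≤ M) (hhM : ∀ᵐ t ∂μ, |h t| ≤ M) {r : ℝ}
    (hr : ∀ᵐ t ∂μ, g t ≤ h t + r) :
    log (∫ t, exp (g t) ∂μ) ≤ log (∫ t, exp (h t) ∂μ) + r := by
  have hpos := (exp_pos _).trans_le (integral_exp_mem_Icc hh hhM).1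
  have hle : ∫ t, exp (g t) ∂μ ≤ (∫ t, exp (h t) ∂μ) * exp r := by
    rw [← integral_mul_const]
    refine integral_mono_ae (integrable_exp_of_abs_le hg hgM)
      ((integrable_exp_of_abs_le hh hhM).mul_const _) ?_
    filter_upwards [hr] with t ht
    rw [← exp_add]
    exact exp_le_exp.2 ht
  calc log (∫ t, exp (g t) ∂μ) ≤ log ((∫ t, exp (h t) ∂μ) * exp r) :=
        log_le_log ((exp_pos _).trans_le (integral_exp_mem_Icc hg hgM).1) hle
    _ = log (∫ t, exp (h t) ∂μ) + r := by rw [log_mul hpos.ne' (exp_pos _).ne', log_exp]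

lemma abs_log_integral_exp_sub_le_of_abs_sub_le (hg : AEStronglyMeasurable g μ)
    (hh : AEStronglyMeasurable h μ) (hgM : ∀ᵐ t ∂μ, |g t| ≤ M) (hhM : ∀ᵐ t ∂μ, |h t| ≤ M)
    {r : ℝ} (hr : ∀ᵐ t ∂μ, |g t - h t| ≤ r) :
    |log (∫ t, exp (g t) ∂μ) - log (∫ t, exp (h t) ∂μ)| ≤ r := by
  rw [abs_sub_le_iff, sub_le_iff_le_add', sub_le_iff_le_add']
  constructor
  · exact log_integral_exp_le_add hg hh hgM hhM <| by
      filter_upwards [hr] with t ht using by linarith [le_of_abs_le ht]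
  · exact log_integral_exp_le_add hh hg hhM hgM <| by
      filter_upwards [hr] with t ht using by linarith [neg_le_of_abs_le ht]

lemma abs_log_integral_exp_sub_le (hg : AEStronglyMeasurable g μ)
    (hh : AEStronglyMeasurable h μ) (hgM : ∀ᵐ t ∂μ, |g t| ≤ M) (hhM : ∀ᵐ t ∂μ, |h t| ≤ M) :
    |log (∫ t, exp (g t) ∂μ) - log (∫ t, exp (h t) ∂μ)| ≤ exp (2 * M) * ∫ t, |g t - h t| ∂μ := by
  have hg' := integrable_exp_of_abs_le hg hgM
  have hh' := integrable_exp_of_abs_le hh hhM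
  have hdiff : |∫ t, exp (g t) ∂μ - ∫ t, exp (h t) ∂μ| ≤ exp M * ∫ t, |g t - h t| ∂μ := by
    rw [← integral_sub hg' hh', ← integral_const_mul]
    refine (abs_integral_le_integral_abs).trans (integral_mono_of_nonneg
      (.of_forall fun _ => abs_nonneg _) ?_ ?_)
    · refine (Integrable.of_bound (hg.sub hh) (2 * M) ?_).abs.const_mul _
      filter_upwards [hgM, hhM] with t hgt hht
      rw [Pi.sub_apply, norm_eq_abs]
      linarith [abs_sub (g t) (h t)]
    · filter_upwards [hgM, hhM] with t hgt hht
      exact abs_exp_sub_exp_le_of_le (le_of_abs_le hgt) (le_of_abs_le hht)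
  calc _ ≤ |∫ t, exp (g t) ∂μ - ∫ t, exp (h t) ∂μ| / exp (-M) :=
        abs_log_sub_log_le (exp_pos _) (integral_exp_mem_Icc hg hgM).1
          (integral_exp_mem_Icc hh hhM).1
    _ ≤ exp M * (∫ t, |g t - h t| ∂μ) / exp (-M) := by gcongr
    _ = exp (2 * M) * ∫ t, |g t - h t| ∂μ := by
        rw [exp_neg, div_inv_eq_mul, mul_right_comm, ← exp_add, two_mul]

variable {u v : α → ℝ}

lemma integral_sq_exp_sub_exp_le (hu : AEStronglyMeasurable u μ) (hv : AEStronglyMeasurable v μ)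
    (huM : ∀ᵐ t ∂μ, |u t| ≤ M) (hvM : ∀ᵐ t ∂μ, |v t| ≤ M) :
    ∫ t, (exp (u t) - exp (v t)) ^ 2 ∂μ ≤ exp (2 * M) * ∫ t, (u t - v t) ^ 2 ∂μ := by
  rw [← integral_const_mul]
  refine integral_mono_of_nonneg (.of_forall fun _ => sq_nonneg _) ?_ ?_
  · refine (Integrable.of_bound ((hu.sub hv).pow 2) ((2 * M) ^ 2) ?_).const_mul _
    filter_upwards [huM, hvM] with t hut hvt
    simp only [Pi.pow_apply, Pi.sub_apply, norm_pow, norm_eq_abs]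
    exact pow_le_pow_left₀ (abs_nonneg _) (by linarith [abs_sub (u t) (v t)]) 2
  · filter_upwards [huM, hvM] with t hut hvt
    calc (exp (u t) - exp (v t)) ^ 2 = |exp (u t) - exp (v t)| ^ 2 := (sq_abs _).symm
      _ ≤ (exp M * |u t - v t|) ^ 2 := pow_le_pow_left₀ (abs_nonneg _)
          (abs_exp_sub_exp_le_of_le (le_of_abs_le hut) (le_of_abs_le hvt)) 2
      _ = exp (2 * M) * (u t - v t) ^ 2 := by rw [mul_pow, sq_abs, ← exp_nat_mul]; norm_num

lemma exp_neg_mul_integral_sq_sub_le (hu : AEStronglyMeasurable u μ)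
    (hv : AEStronglyMeasurable v μ) (huM : ∀ᵐ t ∂μ, |u t| ≤ M) (hvM : ∀ᵐ t ∂μ, |v t| ≤ M) :
    exp (-(2 * M)) * ∫ t, (u t - v t) ^ 2 ∂μ ≤ ∫ t, (exp (u t) - exp (v t)) ^ 2 ∂μ := by
  rw [← integral_const_mul]
  refine integral_mono_of_nonneg (.of_forall fun _ => by positivity) ?_ ?_
  · refine Integrable.of_bound (((continuous_exp.comp_aestronglyMeasurable hu).sub
      (continuous_exp.comp_aestronglyMeasurable hv)).pow 2) ((2 * exp M) ^ 2) ?_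
    filter_upwards [huM, hvM] with t hut hvt
    simp only [norm_pow, norm_eq_abs]
    refine pow_le_pow_left₀ (abs_nonneg _) ?_ 2
    have := exp_le_exp.2 (le_of_abs_le hut)
    have := exp_le_exp.2 (le_of_abs_le hvt)
    rw [abs_le]; constructor <;> linarith [exp_pos (u t), exp_pos (v t)]
  · filter_upwards [huM, hvM] with t hut hvt
    calc exp (-(2 * M)) * (u t - v t) ^ 2 = (exp (-M) * |u t - v t|) ^ 2 := by
          rw [mul_pow, sq_abs, ← exp_nat_mul]; norm_num
      _ ≤ |exp (u t) - exp (v t)| ^ 2 := pow_le_pow_left₀ (by positivity)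
          (exp_mul_abs_sub_le_abs_exp_sub_exp (neg_le_of_abs_le hut) (neg_le_of_abs_le hvt)) 2
      _ = (exp (u t) - exp (v t)) ^ 2 := sq_abs _

end ExpIntegral

section Expansion

variable {α : Type*} {φ : ℕ → α → ℝ} {B : ℝ}

def expansion (φ : ℕ → α → ℝ) (θ : ℕ → ℝ) (t : α) : ℝ := ∑' j, θ j * φ j t

lemma summable_mul_apply {θ : ℕ → ℝ} (hθ : Summable fun j => |θ j|) {t : α}
    (ht : ∀ j, |φ j t| ≤ B) : Summable fun j => θ j * φ j t :=
  .of_norm_bounded (hθ.mul_right B) fun j => by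
    rw [norm_mul, norm_eq_abs, norm_eq_abs]
    exact mul_le_mul_of_nonneg_left (ht j) (abs_nonneg _)

lemma abs_expansion_le {θ : ℕ → ℝ} (hθ : Summable fun j => |θ j|) {t : α}
    (ht : ∀ j, |φ j t| ≤ B) : |expansion φ θ t| ≤ B * l1norm θ := by
  have hbound : ∀ j, ‖θ j * φ j t‖ ≤ |θ j| * B := fun j => by
    rw [norm_mul, norm_eq_abs, norm_eq_abs]
    exact mul_le_mul_of_nonneg_left (ht j) (abs_nonneg _)
  have hnorm : Summable fun j => ‖θ j * φ j t‖ :=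
    .of_nonneg_of_le (fun _ => norm_nonneg _) hbound (hθ.mul_right B)
  calc |expansion φ θ t| ≤ ∑' j, ‖θ j * φ j t‖ := norm_tsum_le_tsum_norm hnorm
    _ ≤ ∑' j, |θ j| * B := hnorm.tsum_le_tsum hbound (hθ.mul_right B)
    _ = B * l1norm θ := by rw [tsum_mul_right, l1norm, mul_comm]

lemma expansion_sub_expansion {a b : ℕ → ℝ} (ha : Summable fun j => |a j|)
    (hb : Summable fun j => |b j|) {t : α} (ht : ∀ j, |φ j t| ≤ B) :
    expansion φ a t - expansion φ b t = expansion φ (fun j => a j - b j) t := by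
  rw [expansion, expansion, expansion,
    ← (summable_mul_apply ha ht).tsum_sub (summable_mul_apply hb ht)]
  simp only [sub_mul]

variable [MeasurableSpace α] {μ : Measure α}
  (hφm : ∀ j, AEStronglyMeasurable (φ j) μ) (hφB : ∀ᵐ t ∂μ, ∀ j, |φ j t| ≤ B)
include hφm hφB

lemma aestronglyMeasurable_expansion {θ : ℕ → ℝ} (hθ : Summable fun j => |θ j|) :
    AEStronglyMeasurable (expansion φ θ) μ := by
  refine aestronglyMeasurable_of_tendsto_ae (f := fun n t => ∑ j ∈ Finset.range n, θ j * φ j t)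
    Filter.atTop (fun n => Finset.aestronglyMeasurable_fun_sum _ fun j _ => (hφm j).const_mul _) ?_
  filter_upwards [hφB] with t ht
  exact (summable_mul_apply hθ ht).hasSum.tendsto_sum_nat

omit hφm in
lemma ae_abs_expansion_le {θ : ℕ → ℝ} (hθ : Summable fun j => |θ j|) :
    ∀ᵐ t ∂μ, |expansion φ θ t| ≤ B * l1norm θ := by
  filter_upwards [hφB] with t ht using abs_expansion_le hθ ht

variable [IsProbabilityMeasure μ]

lemma integral_mul_expansion {ψ : α → ℝ} (hψ : AEStronglyMeasurable ψ μ) {C : ℝ}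
    (hψC : ∀ᵐ t ∂μ, |ψ t| ≤ C) {d : ℕ → ℝ} (hd : Summable fun j => |d j|) :
    ∫ t, ψ t * expansion φ d t ∂μ = ∑' j, d j * ∫ t, ψ t * φ j t ∂μ := by
  have hbound : ∀ j, ∀ᵐ t ∂μ, ‖d j * (ψ t * φ j t)‖ ≤ |d j| * (C * B) := fun j => by
    filter_upwards [hψC, hφB] with t hψt hφt
    rw [norm_eq_abs, abs_mul, abs_mul]
    exact mul_le_mul_of_nonneg_left
      (mul_le_mul hψt (hφt j) (abs_nonneg _) ((abs_nonneg _).trans hψt)) (abs_nonneg _)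
  have hint : ∀ j, Integrable (fun t => d j * (ψ t * φ j t)) μ := fun j =>
    .of_bound ((hψ.mul (hφm j)).const_mul _) _ (hbound j)
  have hsum : Summable fun j => ∫ t, ‖d j * (ψ t * φ j t)‖ ∂μ := by
    refine .of_nonneg_of_le (fun j => integral_nonneg fun _ => norm_nonneg _) (fun j => ?_)
      (hd.mul_right (C * B))
    calc ∫ t, ‖d j * (ψ t * φ j t)‖ ∂μ ≤ ∫ _, |d j| * (C * B) ∂μ :=
          integral_mono_of_nonneg (.of_forall fun _ => norm_nonneg _) (integrable_const _)
            (hbound j)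
      _ = |d j| * (C * B) := by simp
  calc ∫ t, ψ t * expansion φ d t ∂μ = ∫ t, ∑' j, d j * (ψ t * φ j t) ∂μ := by
        simp_rw [expansion, ← tsum_mul_left, mul_left_comm (ψ _)]
    _ = ∑' j, d j * ∫ t, ψ t * φ j t ∂μ := by
        rw [← integral_tsum_of_summable_integral_norm hint hsum]
        simp_rw [integral_const_mul]

lemma integral_expansion (hmean : ∀ j, ∫ t, φ j t ∂μ = 0) {d : ℕ → ℝ}
    (hd : Summable fun j => |d j|) : ∫ t, expansion φ d t ∂μ = 0 := by
  simpa [hmean] using integral_mul_expansion hφm hφB (ψ := fun _ => 1) aestronglyMeasurable_const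
    (C := 1) (.of_forall fun _ => by simp) hd

lemma integrable_expansion {θ : ℕ → ℝ} (hθ : Summable fun j => |θ j|) :
    Integrable (expansion φ θ) μ :=
  .of_bound (aestronglyMeasurable_expansion hφm hφB hθ) _ (ae_abs_expansion_le hφB hθ)

lemma integral_apply_mul_expansion
    (horth : ∀ i j, ∫ t, φ i t * φ j t ∂μ = if i = j then 1 else 0) {d : ℕ → ℝ}
    (hd : Summable fun j => |d j|) (i : ℕ) : ∫ t, φ i t * expansion φ d t ∂μ = d i := by
  rw [integral_mul_expansion hφm hφB (hφm i) (hφB.mono fun t ht => ht i) hd]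
  simp [horth, eq_comm (a := i)]

lemma integral_expansion_sq (horth : ∀ i j, ∫ t, φ i t * φ j t ∂μ = if i = j then 1 else 0)
    {d : ℕ → ℝ} (hd : Summable fun j => |d j|) :
    ∫ t, expansion φ d t ^ 2 ∂μ = ∑' j, d j ^ 2 := by
  simp_rw [sq, integral_mul_expansion hφm hφB (aestronglyMeasurable_expansion hφm hφB hd)
    (ae_abs_expansion_le hφB hd) hd, mul_comm (expansion φ d _),
    integral_apply_mul_expansion hφm hφB horth hd]

lemma integral_sq_expansion_sub (horth : ∀ i j, ∫ t, φ i t * φ j t ∂μ = if i = j then 1 else 0)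
    (hmean : ∀ j, ∫ t, φ j t ∂μ = 0) {d : ℕ → ℝ} (hd : Summable fun j => |d j|) (κ : ℝ) :
    ∫ t, (expansion φ d t - κ) ^ 2 ∂μ = ∑' j, d j ^ 2 + κ ^ 2 := by
  have hS := integrable_expansion hφm hφB hd
  have hS2 : Integrable (fun t => expansion φ d t ^ 2) μ :=
    .of_bound (hS.aestronglyMeasurable.pow 2) ((B * l1norm d) ^ 2) <| by
      filter_upwards [ae_abs_expansion_le hφB hd] with t ht
      rw [norm_pow, norm_eq_abs]
      exact pow_le_pow_left₀ (abs_nonneg _) ht 2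
  have hexpand : ∀ t, (expansion φ d t - κ) ^ 2 =
      expansion φ d t ^ 2 + (-(2 * κ) * expansion φ d t + κ ^ 2) := fun t => by ring
  simp_rw [hexpand]
  have hlin : Integrable (fun t => -(2 * κ) * expansion φ d t) μ := hS.const_mul _
  have hrest : Integrable (fun t => -(2 * κ) * expansion φ d t + κ ^ 2) μ :=
    hlin.add (integrable_const _)
  rw [integral_add hS2 hrest,
    integral_add hlin (integrable_const _), integral_const_mul,
    integral_expansion_sq hφm hφB horth hd, integral_expansion hφm hφB hmean hd]
  simp

lemma integral_abs_expansion_le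
    (horth : ∀ i j, ∫ t, φ i t * φ j t ∂μ = if i = j then 1 else 0) {d : ℕ → ℝ}
    (hd : Summable fun j => |d j|) : ∫ t, |expansion φ d t| ∂μ ≤ l2norm d := by
  have hvar := ProbabilityTheory.variance_nonneg (fun t => |expansion φ d t|) μ
  rw [ProbabilityTheory.variance_eq_sub] at hvar
  · rw [l2norm, le_sqrt (integral_nonneg fun _ => abs_nonneg _) (tsum_nonneg fun _ => sq_nonneg _),
      ← integral_expansion_sq hφm hφB horth hd]
    simpa using hvar
  · exact .of_bound (aestronglyMeasurable_expansion hφm hφB hd).norm _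
      (by simpa using ae_abs_expansion_le hφB hd)

end Expansion

section SequenceNorms

lemma l1norm_nonneg (θ : ℕ → ℝ) : 0 ≤ l1norm θ := tsum_nonneg fun _ => abs_nonneg _

lemma l2norm_nonneg (θ : ℕ → ℝ) : 0 ≤ l2norm θ := sqrt_nonneg _

lemma l2norm_sq (θ : ℕ → ℝ) : l2norm θ ^ 2 = ∑' j, θ j ^ 2 :=
  sq_sqrt (tsum_nonneg fun _ => sq_nonneg _)

lemma summable_abs_sub {a b : ℕ → ℝ} (ha : Summable fun j => |a j|)
    (hb : Summable fun j => |b j|) : Summable fun j => |a j - b j| :=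
  summable_abs_iff.2 (ha.of_abs.sub hb.of_abs)

lemma l1norm_le_add {a b c : ℕ → ℝ} (ha : Summable fun j => |a j|)
    (hb : Summable fun j => |b j|) (h : ∀ j, |c j| ≤ |a j| + |b j|) :
    l1norm c ≤ l1norm a + l1norm b := by
  rw [l1norm, l1norm, l1norm, ← ha.tsum_add hb]
  exact (ha.add hb).of_nonneg_of_le (fun _ => abs_nonneg _) h |>.tsum_le_tsum h (ha.add hb)

lemma l1norm_le_l1norm_add_l1norm_sub {a b : ℕ → ℝ} (ha : Summable fun j => |a j|)
    (hb : Summable fun j => |b j|) : l1norm b ≤ l1norm a + l1norm (fun j => a j - b j) :=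
  l1norm_le_add ha (summable_abs_sub ha hb) fun j => by
    linarith [abs_sub_abs_le_abs_sub (b j) (a j), abs_sub_comm (b j) (a j)]

lemma summable_sq_of_summable_abs {d : ℕ → ℝ} (hd : Summable fun j => |d j|) :
    Summable fun j => d j ^ 2 := by
  refine hd.of_norm_bounded_eventually_nat ?_
  filter_upwards [hd.tendsto_atTop_zero.eventually (gt_mem_nhds one_pos)] with j hj
  rw [norm_pow, norm_eq_abs, sq]
  exact mul_le_of_le_one_left (abs_nonneg _) hj.le

lemma sum_range_abs_le_sqrt_mul_l2norm {d : ℕ → ℝ} (hd : Summable fun j => d j ^ 2) (k : ℕ) :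
    ∑ j ∈ Finset.range k, |d j| ≤ √k * l2norm d := by
  rw [l2norm, ← sqrt_mul (Nat.cast_nonneg k),
    le_sqrt (Finset.sum_nonneg fun _ _ => abs_nonneg _) (by positivity)]
  calc (∑ j ∈ Finset.range k, |d j|) ^ 2 ≤ k * ∑ j ∈ Finset.range k, |d j| ^ 2 := by
        simpa using sq_sum_le_card_mul_sum_sq (s := Finset.range k) (f := fun j => |d j|)
    _ ≤ k * ∑' j, d j ^ 2 := by
        simp_rw [sq_abs]
        gcongr
        exact hd.sum_le_tsum _ fun _ _ => sq_nonneg _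

lemma l1norm_le_sqrt_mul_l2norm_add_tail {d : ℕ → ℝ} (hd : Summable fun j => |d j|) (k : ℕ) :
    l1norm d ≤ √k * l2norm d + ∑' j, |d (j + k)| := by
  rw [l1norm, ← hd.sum_add_tsum_nat_add k]
  gcongr
  exact sum_range_abs_le_sqrt_mul_l2norm (summable_sq_of_summable_abs hd) k

end SequenceNorms

section Pad

variable {k : ℕ} (v : Fin k → ℝ)

lemma pad_add_self (j : ℕ) : pad k v (j + k) = 0 := by simp [pad]

lemma summable_abs_pad : Summable fun j => |pad k v j| :=
  summable_of_ne_finset_zero (s := Finset.range k) fun j hj => by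
    simp_all [pad]

lemma l1norm_pad_sub_le {θ : ℕ → ℝ} (hθ : Summable fun j => |θ j|) :
    l1norm (fun j => pad k v j - θ j) ≤ √k * l2norm (fun j => pad k v j - θ j) + l1norm θ := by
  refine (l1norm_le_sqrt_mul_l2norm_add_tail (summable_abs_sub (summable_abs_pad v) hθ) k).trans ?_
  gcongr
  simp only [pad_add_self, zero_sub, abs_neg]
  exact tsum_comp_le_tsum_of_inj hθ (fun _ => abs_nonneg _) (add_left_injective k)

lemma l1norm_pad_sub_pad_le (v' : Fin k → ℝ) :
    l1norm (fun j => pad k v j - pad k v' j) ≤ √k * l2norm (fun j => pad k v j - pad k v' j) := by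
  simpa [pad_add_self] using l1norm_le_sqrt_mul_l2norm_add_tail
    (summable_abs_sub (summable_abs_pad v) (summable_abs_pad v')) k

end Pad

instance : IsProbabilityMeasure (volume.restrict (Icc (0 : ℝ) 1)) :=
  ⟨by simp⟩

def logSqrtDens (φ : ℕ → ℝ → ℝ) (θ : ℕ → ℝ) (t : ℝ) : ℝ :=
  (expansion φ θ t - logNorm φ θ) / 2

lemma expDens_eq_exp_two_mul (φ : ℕ → ℝ → ℝ) (θ : ℕ → ℝ) (t : ℝ) :
    expDens φ θ t = exp (2 * logSqrtDens φ θ t) := by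
  rw [expDens, logSqrtDens, expansion]; ring_nf

lemma sqrt_expDens (φ : ℕ → ℝ → ℝ) (θ : ℕ → ℝ) (t : ℝ) :
    √(expDens φ θ t) = exp (logSqrtDens φ θ t) := by
  rw [expDens_eq_exp_two_mul, two_mul, exp_add, sqrt_mul_self (exp_pos _).le]

lemma hellSq_expDens (φ : ℕ → ℝ → ℝ) (a b : ℕ → ℝ) :
    hellSq (expDens φ a) (expDens φ b) =
      ∫ t in Icc (0 : ℝ) 1, (exp (logSqrtDens φ a t) - exp (logSqrtDens φ b t)) ^ 2 := by
  simp only [hellSq, sqrt_expDens]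

lemma hellSq_nonneg (p q : ℝ → ℝ) : 0 ≤ hellSq p q :=
  integral_nonneg fun _ => sq_nonneg _

section Icc

variable {φ : ℕ → ℝ → ℝ} {B : ℝ}
  (hφm : ∀ j, AEStronglyMeasurable (φ j) (volume.restrict (Icc (0 : ℝ) 1)))
  (hφB : ∀ᵐ t ∂(volume.restrict (Icc (0 : ℝ) 1)), ∀ j, |φ j t| ≤ B)
include hφm hφB

lemma abs_logNorm_le {θ : ℕ → ℝ} (hθ : Summable fun j => |θ j|) :
    |logNorm φ θ| ≤ B * l1norm θ :=
  abs_log_integral_exp_le (aestronglyMeasurable_expansion hφm hφB hθ) (ae_abs_expansion_le hφB hθ)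

lemma abs_logNorm_sub_le_l1norm {a b : ℕ → ℝ} (ha : Summable fun j => |a j|)
    (hb : Summable fun j => |b j|) :
    |logNorm φ a - logNorm φ b| ≤ B * l1norm (fun j => a j - b j) := by
  refine abs_log_integral_exp_sub_le_of_abs_sub_le (M := max (B * l1norm a) (B * l1norm b))
    (aestronglyMeasurable_expansion hφm hφB ha) (aestronglyMeasurable_expansion hφm hφB hb)
    ((ae_abs_expansion_le hφB ha).mono fun _ ht => ht.trans (le_max_left _ _))
    ((ae_abs_expansion_le hφB hb).mono fun _ ht => ht.trans (le_max_right _ _)) ?_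
  filter_upwards [hφB] with t ht
  rw [expansion_sub_expansion ha hb ht]
  exact abs_expansion_le (summable_abs_sub ha hb) ht

lemma abs_logNorm_sub_le_l2norm
    (horth : ∀ i j, ∫ t in Icc (0 : ℝ) 1, φ i t * φ j t = if i = j then 1 else 0)
    {a b : ℕ → ℝ} (ha : Summable fun j => |a j|) (hb : Summable fun j => |b j|) {M : ℝ}
    (haM : B * l1norm a ≤ M) (hbM : B * l1norm b ≤ M) :
    |logNorm φ a - logNorm φ b| ≤ exp (2 * M) * l2norm (fun j => a j - b j) := by
  refine (abs_log_integral_exp_sub_le (aestronglyMeasurable_expansion hφm hφB ha)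
    (aestronglyMeasurable_expansion hφm hφB hb)
    ((ae_abs_expansion_le hφB ha).mono fun _ ht => ht.trans haM)
    ((ae_abs_expansion_le hφB hb).mono fun _ ht => ht.trans hbM)).trans ?_
  gcongr
  calc ∫ t in Icc (0 : ℝ) 1, |expansion φ a t - expansion φ b t|
      = ∫ t in Icc (0 : ℝ) 1, |expansion φ (fun j => a j - b j) t| := by
        refine integral_congr_ae ?_
        filter_upwards [hφB] with t ht
        rw [expansion_sub_expansion ha hb ht]
    _ ≤ l2norm (fun j => a j - b j) :=
        integral_abs_expansion_le hφm hφB horth (summable_abs_sub ha hb)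

lemma aestronglyMeasurable_logSqrtDens {θ : ℕ → ℝ} (hθ : Summable fun j => |θ j|) :
    AEStronglyMeasurable (logSqrtDens φ θ) (volume.restrict (Icc (0 : ℝ) 1)) := by
  have := aestronglyMeasurable_expansion hφm hφB hθ
  unfold logSqrtDens
  fun_prop

lemma ae_abs_logSqrtDens_le {θ : ℕ → ℝ} (hθ : Summable fun j => |θ j|) :
    ∀ᵐ t ∂(volume.restrict (Icc (0 : ℝ) 1)), |logSqrtDens φ θ t| ≤ B * l1norm θ := by
  filter_upwards [ae_abs_expansion_le hφB hθ] with t ht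
  rw [logSqrtDens, abs_div, abs_two, div_le_iff₀ two_pos]
  linarith [abs_sub (expansion φ θ t) (logNorm φ θ), abs_logNorm_le hφm hφB hθ]

omit hφm in
lemma ae_logSqrtDens_sub {a b : ℕ → ℝ} (ha : Summable fun j => |a j|)
    (hb : Summable fun j => |b j|) :
    ∀ᵐ t ∂(volume.restrict (Icc (0 : ℝ) 1)), logSqrtDens φ a t - logSqrtDens φ b t =
      (expansion φ (fun j => a j - b j) t - (logNorm φ a - logNorm φ b)) / 2 := by
  filter_upwards [hφB] with t ht
  rw [logSqrtDens, logSqrtDens, ← expansion_sub_expansion ha hb ht]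
  ring

lemma integral_sq_logSqrtDens_sub
    (horth : ∀ i j, ∫ t in Icc (0 : ℝ) 1, φ i t * φ j t = if i = j then 1 else 0)
    (hmean : ∀ j, ∫ t in Icc (0 : ℝ) 1, φ j t = 0)
    {a b : ℕ → ℝ} (ha : Summable fun j => |a j|) (hb : Summable fun j => |b j|) :
    ∫ t in Icc (0 : ℝ) 1, (logSqrtDens φ a t - logSqrtDens φ b t) ^ 2 =
      (l2norm (fun j => a j - b j) ^ 2 + (logNorm φ a - logNorm φ b) ^ 2) / 4 := by
  rw [integral_congr_ae ((ae_logSqrtDens_sub hφB ha hb).mono fun t ht => by rw [ht, div_pow]),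
    integral_div, integral_sq_expansion_sub hφm hφB horth hmean (summable_abs_sub ha hb),
    l2norm_sq]
  norm_num

lemma hellSq_expDens_mem_Icc
    (horth : ∀ i j, ∫ t in Icc (0 : ℝ) 1, φ i t * φ j t = if i = j then 1 else 0)
    (hmean : ∀ j, ∫ t in Icc (0 : ℝ) 1, φ j t = 0) (hB : 0 ≤ B)
    {a b : ℕ → ℝ} (ha : Summable fun j => |a j|) (hb : Summable fun j => |b j|) :
    hellSq (expDens φ a) (expDens φ b) ∈
      Icc (4⁻¹ * exp (-(6 * B * (l1norm a + l1norm fun j => a j - b j))) *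
          l2norm (fun j => a j - b j) ^ 2)
        (4 * exp (6 * B * (l1norm a + l1norm fun j => a j - b j)) *
          l2norm (fun j => a j - b j) ^ 2) := by
  set M := B * (l1norm a + l1norm fun j => a j - b j) with hM
  have haM : B * l1norm a ≤ M :=
    mul_le_mul_of_nonneg_left (le_add_of_nonneg_right (l1norm_nonneg _)) hB
  have hbM : B * l1norm b ≤ M :=
    mul_le_mul_of_nonneg_left (l1norm_le_l1norm_add_l1norm_sub ha hb) hB
  have hu := aestronglyMeasurable_logSqrtDens hφm hφB ha
  have hv := aestronglyMeasurable_logSqrtDens hφm hφB hb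
  have huM := (ae_abs_logSqrtDens_le hφm hφB ha).mono fun _ ht => ht.trans haM
  have hvM := (ae_abs_logSqrtDens_le hφm hφB hb).mono fun _ ht => ht.trans hbM
  have hlo := exp_neg_mul_integral_sq_sub_le hu hv huM hvM
  have hhi := integral_sq_exp_sub_exp_le hu hv huM hvM
  rw [← hellSq_expDens, integral_sq_logSqrtDens_sub hφm hφB horth hmean ha hb] at hlo hhi
  set L := l2norm (fun j => a j - b j)
  have hM0 : 0 ≤ M := (mul_nonneg hB (l1norm_nonneg a)).trans haM
  have hκ : (logNorm φ a - logNorm φ b) ^ 2 ≤ exp (2 * M) ^ 2 * L ^ 2 := by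
    rw [← mul_pow, ← sq_abs]
    exact pow_le_pow_left₀ (abs_nonneg _)
      (abs_logNorm_sub_le_l2norm hφm hφB horth ha hb haM hbM) 2
  have hX : 1 ≤ exp (2 * M) := one_le_exp (by linarith)
  rw [mul_assoc 6 B, ← hM]
  constructor
  · calc 4⁻¹ * exp (-(6 * M)) * L ^ 2 ≤ exp (-(2 * M)) * (L ^ 2 / 4) := by
          have := exp_le_exp.2 (show -(6 * M) ≤ -(2 * M) by linarith)
          linarith [mul_le_mul_of_nonneg_right this (sq_nonneg L)]
      _ ≤ _ := le_trans (by gcongr; exact le_add_of_nonneg_right (sq_nonneg _)) hlo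
  · have h6 : exp (6 * M) = exp (2 * M) ^ 3 := by rw [← exp_nat_mul]; ring_nf
    rw [h6]
    refine hhi.trans ?_
    nlinarith [sq_nonneg L, mul_le_mul_of_nonneg_left hκ (exp_pos (2 * M)).le,
      mul_nonneg (mul_nonneg (sub_nonneg.2 hX) (sub_nonneg.2 hX)) (sq_nonneg L)]

lemma hell_expDens_mem_Icc_of_l1norm_le
    (horth : ∀ i j, ∫ t in Icc (0 : ℝ) 1, φ i t * φ j t = if i = j then 1 else 0)
    (hmean : ∀ j, ∫ t in Icc (0 : ℝ) 1, φ j t = 0) (hB : 0 ≤ B)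
    {a b : ℕ → ℝ} (ha : Summable fun j => |a j|) (hb : Summable fun j => |b j|) {S : ℝ}
    (hS : l1norm a + l1norm (fun j => a j - b j) ≤ S) :
    hell (expDens φ a) (expDens φ b) ∈
      Icc ((2 * exp (3 * B * S))⁻¹ * l2norm (fun j => a j - b j))
        (2 * exp (3 * B * S) * l2norm (fun j => a j - b j)) := by
  obtain ⟨hlo, hhi⟩ := hellSq_expDens_mem_Icc hφm hφB horth hmean hB ha hb
  have hL := l2norm_nonneg (fun j => a j - b j)
  have hE : exp (3 * B * S) ^ 2 = exp (6 * B * S) := by rw [← exp_nat_mul]; ring_nf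
  constructor
  · rw [hell, le_sqrt (by positivity) (hellSq_nonneg _ _)]
    refine le_trans ?_ hlo
    have hinv : (2 * exp (3 * B * S))⁻¹ ^ 2 = 4⁻¹ * exp (-(6 * B * S)) := by
      rw [inv_pow, mul_pow, hE, exp_neg, mul_inv]; norm_num
    rw [mul_pow, hinv]
    gcongr
  · rw [hell, sqrt_le_left (by positivity), mul_pow, mul_pow, hE]
    refine hhi.trans ?_
    gcongr
    norm_num

lemma integral_expDens {θ : ℕ → ℝ} (hθ : Summable fun j => |θ j|) :
    ∫ t in Icc (0 : ℝ) 1, expDens φ θ t = 1 := by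
  have hZ : 0 < ∫ t in Icc (0 : ℝ) 1, exp (∑' j, θ j * φ j t) :=
    (exp_pos _).trans_le (integral_exp_mem_Icc (aestronglyMeasurable_expansion hφm hφB hθ)
      (ae_abs_expansion_le hφB hθ)).1
  simp_rw [expDens, exp_sub]
  rw [integral_div, logNorm, exp_log hZ, div_self hZ.ne']

lemma integrable_expDens {θ : ℕ → ℝ} (hθ : Summable fun j => |θ j|) :
    Integrable (expDens φ θ) (volume.restrict (Icc (0 : ℝ) 1)) := by
  rw [show expDens φ θ = fun t => exp (2 * logSqrtDens φ θ t) from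
    funext (expDens_eq_exp_two_mul φ θ)]
  refine integrable_exp_of_abs_le (M := 2 * (B * l1norm θ))
    ((aestronglyMeasurable_logSqrtDens hφm hφB hθ).const_mul 2)
    ((ae_abs_logSqrtDens_le hφm hφB hθ).mono fun t ht => ?_)
  rw [abs_mul, abs_two]
  exact mul_le_mul_of_nonneg_left ht two_pos.le

lemma hellSq_expDens_le_l1norm {a b : ℕ → ℝ} (ha : Summable fun j => |a j|)
    (hb : Summable fun j => |b j|) :
    hellSq (expDens φ a) (expDens φ b) ≤
      exp (2 * (B * l1norm fun j => a j - b j)) * (B * l1norm fun j => a j - b j) ^ 2 := by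
  set r := B * l1norm fun j => a j - b j
  have hκ := abs_logNorm_sub_le_l1norm hφm hφB ha hb
  rw [hellSq_expDens]
  refine (integral_mono_of_nonneg (g := fun t => expDens φ a t * (exp (2 * r) * r ^ 2))
    (ae_of_all _ fun t => sq_nonneg (exp (logSqrtDens φ a t) - exp (logSqrtDens φ b t))) ?_ ?_).trans_eq
    (by rw [integral_mul_const, integral_expDens hφm hφB ha, one_mul])
  · exact (integrable_expDens hφm hφB ha).mul_const _
  · filter_upwards [ae_logSqrtDens_sub hφB ha hb, hφB] with t hsub ht
    have hr : |logSqrtDens φ a t - logSqrtDens φ b t| ≤ r := by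
      rw [hsub, abs_div, abs_two, div_le_iff₀ two_pos]
      linarith [abs_sub (expansion φ (fun j => a j - b j) t) (logNorm φ a - logNorm φ b),
        abs_expansion_le (summable_abs_sub ha hb) ht]
    set u := logSqrtDens φ a t
    set v := logSqrtDens φ b t
    have hexp : exp (u + r) ^ 2 = exp (2 * u) * exp (2 * r) := by
      rw [sq, ← exp_add, ← exp_add]; ring_nf
    calc (exp u - exp v) ^ 2 = |exp u - exp v| ^ 2 := (sq_abs _).symm
      _ ≤ (exp (u + r) * |u - v|) ^ 2 := by
          gcongr
          exact abs_exp_sub_exp_le_of_le (le_add_of_nonneg_right ((abs_nonneg _).trans hr))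
            (by linarith [neg_le_of_abs_le hr])
      _ ≤ (exp (u + r) * r) ^ 2 := by gcongr
      _ = expDens φ a t * (exp (2 * r) * r ^ 2) := by
          rw [mul_pow, hexp, expDens_eq_exp_two_mul]; ring

lemma hell_expDens_le_of_l1norm_le_one (hB : 0 ≤ B) {a b : ℕ → ℝ}
    (ha : Summable fun j => |a j|) (hb : Summable fun j => |b j|)
    (h1 : l1norm (fun j => a j - b j) ≤ 1) :
    hell (expDens φ a) (expDens φ b) ≤ B * exp B * l1norm (fun j => a j - b j) := by
  have hr : B * l1norm (fun j => a j - b j) ≤ B := mul_le_of_le_one_right hB h1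
  rw [hell, sqrt_le_left (by positivity [l1norm_nonneg (fun j => a j - b j)])]
  refine (hellSq_expDens_le_l1norm hφm hφB ha hb).trans ?_
  have hexp : exp B ^ 2 = exp (2 * B) := by rw [← exp_nat_mul]; norm_num
  rw [mul_right_comm, mul_pow _ (exp B), hexp, mul_comm]
  gcongr

end Icc

/-- **Supplementary Lemma (Hellinger–ℓ₂ comparison for exponential families).** -/
theorem hellinger_l2_comparison_expFamily
    (φ : ℕ → ℝ → ℝ)
    (hφmeas : ∀ j, Measurable (φ j))
    (hφbd : ∃ B : ℝ, ∀ (j : ℕ), ∀ t ∈ Set.Icc (0 : ℝ) 1, |φ j t| ≤ B)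
    (hφorth : ∀ i j : ℕ, (∫ t in Set.Icc (0 : ℝ) 1, φ i t * φ j t) =
      if i = j then 1 else 0)
    (hφmean : ∀ j : ℕ, (∫ t in Set.Icc (0 : ℝ) 1, φ j t) = 0) :
    -- (i) two-sided comparison, and its consequence
    ((∃ ct : ℝ, 0 < ct ∧ ∀ A : ℝ, 0 < A → ∃ CA : ℝ, 0 < CA ∧
        ∀ θ1 θ2 : ℕ → ℝ, memL1L2 θ1 → memL1L2 θ2 →
          l2norm (fun j => θ1 j - θ2 j) ≤ A →
          CA⁻¹ * Real.exp (-(ct * (l1norm θ1 + l1norm (fun j => θ1 j - θ2 j)))) *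
              l2norm (fun j => θ1 j - θ2 j) ^ 2 ≤
            hellSq (expDens φ θ1) (expDens φ θ2) ∧
          hellSq (expDens φ θ1) (expDens φ θ2) ≤
            CA * Real.exp (ct * (l1norm θ1 + l1norm (fun j => θ1 j - θ2 j))) *
              l2norm (fun j => θ1 j - θ2 j) ^ 2) ∧
      (∀ c L : ℝ, 0 < c → 0 < L → ∃ C' : ℝ, 1 ≤ C' ∧
        ∀ k : ℕ, 1 ≤ k → ∀ θ0 : ℕ → ℝ, memL1L2 θ0 → l1norm θ0 ≤ L →
          ∀ v : Fin k → ℝ,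
            l2norm (fun j => pad k v j - θ0 j) ≤ c / Real.sqrt k →
            C'⁻¹ * l2norm (fun j => pad k v j - θ0 j) ≤
                hell (expDens φ (pad k v)) (expDens φ θ0) ∧
              hell (expDens φ (pad k v)) (expDens φ θ0) ≤
                C' * l2norm (fun j => pad k v j - θ0 j))) ∧
    -- (ii) crude Hellinger bound
    (∃ δ C : ℝ, 0 < δ ∧ 0 < C ∧ ∀ k : ℕ, 1 ≤ k → ∀ v v' : Fin k → ℝ,
      l2norm (fun j => pad k v j - pad k v' j) ≤ δ / Real.sqrt k →
      hell (expDens φ (pad k v)) (expDens φ (pad k v')) ≤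
        C * Real.sqrt k * l2norm (fun j => pad k v j - pad k v' j)) := by
  obtain ⟨B₀, hB₀⟩ := hφbd
  set B := max B₀ 1
  have hB : 0 < B := one_pos.trans_le (le_max_right _ _)
  have hφm j := (hφmeas j).aestronglyMeasurable (μ := volume.restrict (Icc (0 : ℝ) 1))
  have hφB : ∀ᵐ t ∂(volume.restrict (Icc (0 : ℝ) 1)), ∀ j, |φ j t| ≤ B :=
    ae_restrict_of_forall_mem measurableSet_Icc fun t ht j => (hB₀ j t ht).trans (le_max_left _ _)
  have hsqrt {k : ℕ} (hk : 1 ≤ k) : (0 : ℝ) < √k := sqrt_pos.2 (by exact_mod_cast hk)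
  refine ⟨⟨⟨6 * B, by positivity, fun _ _ => ⟨4, four_pos, fun θ1 θ2 h1 h2 _ =>
    hellSq_expDens_mem_Icc hφm hφB hφorth hφmean hB.le h1.1 h2.1⟩⟩, fun c L hc hL => ?_⟩,
    ⟨1, B * exp B, one_pos, by positivity, fun k hk v v' hvv' => ?_⟩⟩
  · refine ⟨2 * exp (3 * B * (3 * L + 2 * c)), ?_, fun k hk θ0 hθ0 hθ0L v hv => ?_⟩
    · linarith [one_le_exp (by positivity : 0 ≤ 3 * B * (3 * L + 2 * c))]
    have hsmall : √k * l2norm (fun j => pad k v j - θ0 j) ≤ c := by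
      rwa [le_div_iff₀ (hsqrt hk), mul_comm] at hv
    have hd := (l1norm_pad_sub_le v hθ0.1).trans (add_le_add hsmall hθ0L)
    have hpad := l1norm_le_add hθ0.1 (summable_abs_sub (summable_abs_pad v) hθ0.1)
      (c := pad k v) fun j => by linarith [abs_sub_abs_le_abs_sub (pad k v j) (θ0 j)]
    exact hell_expDens_mem_Icc_of_l1norm_le hφm hφB hφorth hφmean hB.le (summable_abs_pad v)
      hθ0.1 (by linarith)
  · have hsmall : √k * l2norm (fun j => pad k v j - pad k v' j) ≤ 1 := by
      rwa [le_div_iff₀ (hsqrt hk), mul_comm] at hvv'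
    have hd := l1norm_pad_sub_pad_le v v'
    refine (hell_expDens_le_of_l1norm_le_one hφm hφB hB.le (summable_abs_pad v)
      (summable_abs_pad v') (hd.trans hsmall)).trans ?_
    rw [mul_assoc _ (√k)]
    gcongr
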